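/- arXiv:0911.0730 — 4 statements merged into one kernel-verified Lean document; each statement's English description precedes it below -/
import Mathlib

section
/- Let n ≥ 1 and q ≥ 2 be integers, t ∈ ZMod q, and let d be a positive divisor of n. Then the number of orbits of cardinality exactly d of the cyclic rotation action on A(n,q,t) equals the sum, over all s ∈ ZMod q satisfying (n/d) • s = t, of L_q(d,s). -/
/-- The cyclic rotation `rot w i = w (i + 1 mod n)`. -/
def rot {n : ℕ} {α : Type*} (w : Fin n → α) : Fin n → α :=
  fun i => w ⟨((i : ℕ) + 1) % n, Nat.mod_lt _ i.pos⟩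

/-- The orbit (necklace) of a word under cyclic rotation. -/
def necklace {n : ℕ} {α : Type*} (v : Fin n → α) : Set (Fin n → α) :=
  {w | ∃ k : ℕ, rot^[k] v = w}

/-- The number of orbits of cardinality exactly `d` of the cyclic rotation action on
`A(n,q,t) = {v : Fin n → ZMod q | ∑ i, v i = t}`. -/
noncomputable def necklaceCount (n q : ℕ) (t : ZMod q) (d : ℕ) : ℕ :=
  Set.ncard {O : Set (Fin n → ZMod q) |
    (∃ v : Fin n → ZMod q, (∑ i, v i = t) ∧ O = necklace v) ∧ O.ncard = d}

section rotfacts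

variable {n : ℕ} {α : Type*}

lemma rot_iterate (hn : 0 < n) (k : ℕ) (v : Fin n → α) (i : Fin n) :
    rot^[k] v i = v ⟨((i : ℕ) + k) % n, Nat.mod_lt _ hn⟩ := by
  induction k generalizing v with
  | zero => simp [Nat.mod_eq_of_lt i.2]
  | succ k ih =>
      rw [Function.iterate_succ_apply, ih (rot v)]
      show v ⟨((((i:ℕ) + k) % n) + 1) % n, _⟩ = _
      congr 1
      apply Fin.ext
      show (((i:ℕ) + k) % n + 1) % n = ((i:ℕ) + (k+1)) % n
      rw [Nat.mod_add_mod, Nat.add_assoc]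

lemma rot_iterate_card (hn : 0 < n) (v : Fin n → α) : rot^[n] v = v := by
  funext i
  rw [rot_iterate hn]
  congr 1
  exact Fin.ext (by simp [Nat.add_mod_right, Nat.mod_eq_of_lt i.2])

lemma rot_injective (hn : 0 < n) :
    Function.Injective (rot : (Fin n → α) → Fin n → α) := by
  intro v w h
  have h2 := congrArg (rot^[n-1]) h
  rwa [← Function.iterate_succ_apply, ← Function.iterate_succ_apply,
    Nat.succ_eq_add_one, Nat.sub_add_cancel hn, rot_iterate_card hn,
    rot_iterate_card hn] at h2

lemma sum_rot [AddCommMonoid α] (v : Fin n → α) : ∑ i, rot v i = ∑ i, v i := by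
  rcases Nat.eq_zero_or_pos n with h | hn
  · subst h; simp
  refine Fintype.sum_bijective
    (fun i : Fin n => (⟨((i:ℕ)+1) % n, Nat.mod_lt _ hn⟩ : Fin n)) ?_ _ v (fun i => rfl)
  rw [Function.bijective_iff_has_inverse]
  refine ⟨fun i => ⟨((i:ℕ) + (n-1)) % n, Nat.mod_lt _ hn⟩, fun i => ?_, fun i => ?_⟩
  · apply Fin.ext
    show (((i:ℕ)+1) % n + (n-1)) % n = (i : ℕ)
    rw [Nat.mod_add_mod, show (i:ℕ) + 1 + (n-1) = (i:ℕ) + n by omega,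
      Nat.add_mod_right, Nat.mod_eq_of_lt i.2]
  · apply Fin.ext
    show (((i:ℕ) + (n-1)) % n + 1) % n = (i : ℕ)
    rw [Nat.mod_add_mod, show (i:ℕ) + (n-1) + 1 = (i:ℕ) + n by omega,
      Nat.add_mod_right, Nat.mod_eq_of_lt i.2]

lemma sum_iterate_rot [AddCommMonoid α] (k : ℕ) (v : Fin n → α) :
    ∑ i, rot^[k] v i = ∑ i, v i := by
  induction k with
  | zero => rfl
  | succ k ih => rw [Function.iterate_succ_apply', sum_rot, ih]

lemma exists_period (hn : 0 < n) (v : Fin n → α) : ∃ k, 0 < k ∧ rot^[k] v = v :=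
  ⟨n, hn, rot_iterate_card hn v⟩

/-- the minimal period -/
noncomputable def per (hn : 0 < n) (v : Fin n → α) : ℕ :=
  @Nat.find _ (Classical.decPred _) (exists_period hn v)

lemma per_pos (hn : 0 < n) (v : Fin n → α) : 0 < per hn v :=
  (@Nat.find_spec _ (Classical.decPred _) (exists_period hn v)).1

lemma rot_per (hn : 0 < n) (v : Fin n → α) : rot^[per hn v] v = v :=
  (@Nat.find_spec _ (Classical.decPred _) (exists_period hn v)).2

lemma per_le (hn : 0 < n) (v : Fin n → α) {k : ℕ} (hk0 : 0 < k)
    (hk : rot^[k] v = v) : per hn v ≤ k :=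
  @Nat.find_min' _ (Classical.decPred _) (exists_period hn v) k ⟨hk0, hk⟩

lemma iterate_mul_per (hn : 0 < n) (v : Fin n → α) (a : ℕ) :
    rot^[a * per hn v] v = v := by
  induction a with
  | zero => simp
  | succ a ih =>
      rw [Nat.succ_mul, Function.iterate_add_apply, rot_per, ih]

lemma iterate_mod_per (hn : 0 < n) (v : Fin n → α) (k : ℕ) :
    rot^[k] v = rot^[k % per hn v] v := by
  conv_lhs => rw [← Nat.mod_add_div' k (per hn v)]
  rw [Function.iterate_add_apply, iterate_mul_per]

lemma period_iff_dvd (hn : 0 < n) (v : Fin n → α) (k : ℕ) :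
    rot^[k] v = v ↔ per hn v ∣ k := by
  constructor
  · intro h
    rw [iterate_mod_per hn] at h
    rw [Nat.dvd_iff_mod_eq_zero]
    by_contra h0
    have := per_le hn v (Nat.pos_of_ne_zero h0) h
    have := Nat.mod_lt k (per_pos hn v)
    omega
  · rintro ⟨a, rfl⟩
    rw [Nat.mul_comm]
    exact iterate_mul_per hn v a

lemma per_dvd_card (hn : 0 < n) (v : Fin n → α) : per hn v ∣ n :=
  (period_iff_dvd hn v n).1 (rot_iterate_card hn v)

lemma ncard_necklace (hn : 0 < n) (v : Fin n → α) :
    (necklace v).ncard = per hn v := by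
  have himg : necklace v = (fun k => rot^[k] v) '' ↑(Finset.range (per hn v)) := by
    ext w
    constructor
    · rintro ⟨k, rfl⟩
      exact ⟨k % per hn v, by simpa using Nat.mod_lt k (per_pos hn v),
        (iterate_mod_per hn v k).symm⟩
    · rintro ⟨k, -, rfl⟩
      exact ⟨k, rfl⟩
  have hinj : Set.InjOn (fun k => rot^[k] v) ↑(Finset.range (per hn v)) := by
    have key : ∀ a b : ℕ, a < b → b < per hn v → rot^[a] v ≠ rot^[b] v := by
      intro a b hab hb h
      have hb' : rot^[a] (rot^[b-a] v) = rot^[a] v := by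
        rw [← Function.iterate_add_apply, show a + (b-a) = b by omega]
        exact h.symm
      have := (rot_injective hn).iterate a hb'
      have := per_le hn v (k := b - a) (by omega) this
      omega
    intro a ha b hb hab
    simp only [Finset.coe_range, Set.mem_Iio] at ha hb
    rcases Nat.lt_trichotomy a b with h | h | h
    · exact absurd hab (key a b h hb)
    · exact h
    · exact absurd hab.symm (key b a h ha)
  rw [himg, Set.ncard_image_of_injOn hinj, Set.ncard_coe_finset, Finset.card_range]

end rotfacts

section repsec

variable {n d : ℕ} {α : Type*}

/-- repeat a word of length `d` to one of length `n` -/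
def rep (hd : 0 < d) (w : Fin d → α) : Fin n → α :=
  fun i => w ⟨(i : ℕ) % d, Nat.mod_lt _ hd⟩

/-- restrict a word of length `n` to its first `d` letters -/
def res (hdn : d ≤ n) (v : Fin n → α) : Fin d → α :=
  fun j => v ⟨(j : ℕ), lt_of_lt_of_le j.2 hdn⟩

lemma res_rep (hd : 0 < d) (hdn : d ≤ n) (w : Fin d → α) :
    res hdn (rep hd w : Fin n → α) = w := by
  funext j
  show w ⟨(j : ℕ) % d, _⟩ = w j
  congr 1
  exact Fin.ext (Nat.mod_eq_of_lt j.2)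

lemma rep_injective (hd : 0 < d) (hdn : d ≤ n) :
    Function.Injective (rep hd : (Fin d → α) → Fin n → α) :=
  Function.LeftInverse.injective (g := res hdn) (res_rep hd hdn)

lemma rot_rep (hd : 0 < d) (hdn : d ∣ n) (w : Fin d → α) :
    rot (rep hd w : Fin n → α) = rep hd (rot w) := by
  funext i
  show w ⟨(((i:ℕ)+1) % n) % d, _⟩ = w ⟨(((i:ℕ) % d) + 1) % d, _⟩
  congr 1
  apply Fin.ext
  show (((i:ℕ)+1) % n) % d = (((i:ℕ) % d) + 1) % d
  rw [Nat.mod_mod_of_dvd _ hdn, Nat.mod_add_mod]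

lemma iterate_rot_rep (hd : 0 < d) (hdn : d ∣ n) (k : ℕ) (w : Fin d → α) :
    rot^[k] (rep hd w : Fin n → α) = rep hd (rot^[k] w) := by
  induction k with
  | zero => rfl
  | succ k ih => rw [Function.iterate_succ_apply', ih, rot_rep hd hdn,
      Function.iterate_succ_apply']

lemma necklace_rep (hd : 0 < d) (hdn : d ∣ n) (w : Fin d → α) :
    necklace (rep hd w : Fin n → α) = rep hd '' necklace w := by
  ext u
  constructor
  · rintro ⟨k, rfl⟩
    exact ⟨rot^[k] w, ⟨k, rfl⟩, (iterate_rot_rep hd hdn k w).symm⟩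
  · rintro ⟨x, ⟨k, rfl⟩, rfl⟩
    exact ⟨k, iterate_rot_rep hd hdn k w⟩

lemma per_rep (hn : 0 < n) (hd : 0 < d) (hdn : d ∣ n) (w : Fin d → α) :
    per hn (rep hd w : Fin n → α) = per hd w := by
  have hle : d ≤ n := Nat.le_of_dvd hn hdn
  apply le_antisymm
  · apply per_le hn _ (per_pos hd w)
    rw [iterate_rot_rep hd hdn, rot_per]
  · apply per_le hd _ (per_pos hn (rep hd w : Fin n → α))
    apply rep_injective hd hle
    rw [← iterate_rot_rep hd hdn, rot_per]

lemma periodic_eq_rep (hn : 0 < n) (hd : 0 < d) (hdn : d ∣ n) (v : Fin n → α)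
    (hv : rot^[d] v = v) :
    v = rep hd (res (Nat.le_of_dvd hn hdn) v) := by
  have hstep : ∀ x : ℕ, v ⟨(x + d) % n, Nat.mod_lt _ hn⟩ = v ⟨x % n, Nat.mod_lt _ hn⟩ := by
    intro x
    have := congrFun hv ⟨x % n, Nat.mod_lt _ hn⟩
    rw [rot_iterate hn] at this
    rw [← this]
    congr 1
    exact Fin.ext (Nat.mod_add_mod x n d).symm
  have claim : ∀ (a : ℕ) (j : Fin n), v ⟨((j:ℕ) + a * d) % n, Nat.mod_lt _ hn⟩ = v j := by
    intro a j
    induction a with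
    | zero =>
        have : ((j:ℕ) + 0 * d) % n = (j:ℕ) := by simp [Nat.mod_eq_of_lt j.2]
        rw [show (⟨((j:ℕ) + 0 * d) % n, Nat.mod_lt _ hn⟩ : Fin n) = j from Fin.ext this]
    | succ a ih =>
        have h1 : (j:ℕ) + (a+1) * d = ((j:ℕ) + a * d) + d := by ring
        rw [show (⟨((j:ℕ) + (a+1) * d) % n, Nat.mod_lt _ hn⟩ : Fin n)
            = ⟨(((j:ℕ) + a * d) + d) % n, Nat.mod_lt _ hn⟩ from Fin.ext (by rw [h1])]
        rw [hstep ((j:ℕ) + a * d)]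
        rw [show (⟨((j:ℕ) + a * d) % n, Nat.mod_lt _ hn⟩ : Fin n)
            = ⟨((j:ℕ) + a * d) % n, Nat.mod_lt _ hn⟩ from rfl] at ih
        exact ih
  funext i
  have hr : (i:ℕ) % d < n := lt_of_lt_of_le (Nat.mod_lt _ hd) (Nat.le_of_dvd hn hdn)
  have := claim ((i:ℕ) / d) ⟨(i:ℕ) % d, hr⟩
  show v i = v ⟨(i:ℕ) % d, hr⟩
  rw [← this]
  congr 1
  apply Fin.ext
  show (i:ℕ) = ((i:ℕ) % d + (i:ℕ) / d * d) % n
  rw [Nat.mod_add_div', Nat.mod_eq_of_lt i.2]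

lemma sum_rep [AddCommMonoid α] (hn : 0 < n) (hd : 0 < d) (hdn : d ∣ n) (w : Fin d → α) :
    ∑ i : Fin n, (rep hd w : Fin n → α) i = (n / d) • ∑ j, w j := by
  set g : ℕ → α := fun x => w ⟨x % d, Nat.mod_lt _ hd⟩ with hg
  have h1 : ∑ i : Fin n, (rep hd w : Fin n → α) i = ∑ x ∈ Finset.range n, g x :=
    Fin.sum_univ_eq_sum_range g n
  have hgd : ∑ x ∈ Finset.range d, g x = ∑ j, w j := by
    rw [← Fin.sum_univ_eq_sum_range g d]
    refine Finset.sum_congr rfl (fun j _ => ?_)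
    show w ⟨(j:ℕ) % d, _⟩ = w j
    congr 1
    exact Fin.ext (Nat.mod_eq_of_lt j.2)
  have h2 : ∀ m : ℕ, ∑ x ∈ Finset.range (d * m), g x = m • ∑ j, w j := by
    intro m
    induction m with
    | zero => simp
    | succ m ih =>
        rw [Nat.mul_succ, Finset.sum_range_add, ih, succ_nsmul]
        congr 1
        rw [← hgd]
        refine Finset.sum_congr rfl (fun x _ => ?_)
        show w ⟨(d * m + x) % d, _⟩ = w ⟨x % d, _⟩
        congr 1
        apply Fin.ext
        show (d * m + x) % d = x % d
        rw [Nat.add_comm, Nat.add_mul_mod_self_left]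
  rw [h1, ← Nat.mul_div_cancel' hdn, h2]
  rw [Nat.mul_div_cancel' hdn]

end repsec

lemma ncard_biUnion {β γ : Type*} (s : Finset β) (f : β → Set γ)
    (hfin : ∀ b, (f b).Finite)
    (hdisj : ∀ a ∈ s, ∀ b ∈ s, a ≠ b → Disjoint (f a) (f b)) :
    (⋃ b ∈ s, f b).ncard = ∑ b ∈ s, (f b).ncard := by
  classical
  induction s using Finset.induction_on with
  | empty => simp
  | @insert a s' ha ih =>
      have hfin2 : (⋃ x ∈ s', f x).Finite :=
        Set.Finite.biUnion s'.finite_toSet (fun b _ => hfin b)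
      have hdj : Disjoint (f a) (⋃ x ∈ s', f x) := by
        rw [Set.disjoint_iUnion_right]
        intro b
        rw [Set.disjoint_iUnion_right]
        intro hb
        exact hdisj a (Finset.mem_insert_self a s') b (Finset.mem_insert_of_mem hb)
          (fun h => ha (h ▸ hb))
      rw [Finset.set_biUnion_insert, Finset.sum_insert ha,
        ← ih (fun x hx y hy hxy =>
          hdisj x (Finset.mem_insert_of_mem hx) y (Finset.mem_insert_of_mem hy) hxy)]
      exact Set.ncard_union_eq hdj (hfin a) hfin2

/-- For `n ≥ 1`, `q ≥ 2`, `t : ZMod q` and a positive divisor `d` of `n`, the number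
of necklaces of `A(n,q,t)` of cardinality exactly `d` equals the sum, over all
`s : ZMod q` with `(n/d) • s = t`, of the number `L_q(d,s)` of Lyndon words of length
`d` and trace `s` (i.e. of necklaces of `A(d,q,s)` of cardinality exactly `d`). -/
theorem necklaceCount_eq_sum_lyndon (n q : ℕ) [NeZero q] (hn : 1 ≤ n) (hq : 2 ≤ q)
    (t : ZMod q) (d : ℕ) (hd1 : 1 ≤ d) (hd : d ∣ n) :
    necklaceCount n q t d =
      ∑ s ∈ Finset.univ.filter (fun s : ZMod q => (n / d) • s = t),
        necklaceCount d q s d := by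
  classical
  have hn0 : 0 < n := hn
  have hd0 : 0 < d := hd1
  have hdn : d ≤ n := Nat.le_of_dvd hn0 hd
  set m := n / d with hm
  set T : ZMod q → Set (Set (Fin d → ZMod q)) := fun s =>
    {O | (∃ v : Fin d → ZMod q, (∑ i, v i = s) ∧ O = necklace v) ∧ O.ncard = d} with hT
  set S : Finset (ZMod q) := Finset.univ.filter (fun s : ZMod q => m • s = t) with hS
  have key : {O : Set (Fin n → ZMod q) |
      (∃ v : Fin n → ZMod q, (∑ i, v i = t) ∧ O = necklace v) ∧ O.ncard = d}
      = Set.image (rep hd0) '' (⋃ s ∈ S, T s) := by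
    ext O
    constructor
    · rintro ⟨⟨v, hvt, rfl⟩, hcard⟩
      rw [ncard_necklace hn0 v] at hcard
      have hvper : rot^[d] v = v := by
        rw [← hcard]; exact rot_per hn0 v
      set w := res hdn v with hw
      have hvw : v = rep hd0 w := periodic_eq_rep hn0 hd0 hd v hvper
      have hperw : per hd0 w = d := by
        rw [← per_rep hn0 hd0 hd w, ← hvw, hcard]
      have hsum : m • ∑ j, w j = t := by
        rw [← hvt, hvw, sum_rep hn0 hd0 hd]
      refine ⟨necklace w, Set.mem_iUnion₂.mpr ⟨∑ j, w j, ?_, ?_⟩, ?_⟩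
      · simp only [hS, Finset.mem_filter, Finset.mem_univ, true_and]
        exact hsum
      · exact ⟨⟨w, rfl, rfl⟩, by rw [ncard_necklace hd0 w, hperw]⟩
      · rw [← necklace_rep hd0 hd, ← hvw]
    · rintro ⟨O', hO', rfl⟩
      rw [Set.mem_iUnion₂] at hO'
      obtain ⟨s, hs, ⟨w, hws, rfl⟩, hcard⟩ := hO'
      simp only [hS, Finset.mem_filter, Finset.mem_univ, true_and] at hs
      constructor
      · refine ⟨rep hd0 w, ?_, (necklace_rep hd0 hd w).symm⟩
        rw [sum_rep hn0 hd0 hd, hws, hs]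
      · rw [← necklace_rep hd0 hd w, ncard_necklace hn0, per_rep hn0 hd0 hd,
          ← ncard_necklace hd0, hcard]
  rw [necklaceCount, key,
    Set.ncard_image_of_injective _ (Set.image_injective.2 (rep_injective hd0 hdn)),
    ncard_biUnion S T (fun s => Set.toFinite _)]
  · rfl
  · intro a _ b _ hab
    rw [Set.disjoint_left]
    rintro O ⟨⟨w, hws, rfl⟩, -⟩ ⟨⟨w', hws', hw'⟩, -⟩
    apply hab
    have hmem : w' ∈ necklace w := by
      rw [hw']; exact ⟨0, rfl⟩
    obtain ⟨k, hk⟩ := hmem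
    rw [← hws, ← hws', ← hk, sum_iterate_rot]
end

section
/- Let n ≥ 1 and q ≥ 1 be integers and t ∈ ZMod q. Then, as an identity of integers, q · n · L_q(n,t) = ∑ gcd(d,q) · μ(d) · q^(n/d), the sum taken over all positive divisors d of n such that gcd(d,q) divides the canonical representative of t in {0,1,…,q−1}, where μ is the Möbius function. -/
/-- The number `L_q(n,t)` of Lyndon words of length `n` and trace `t`, i.e. the number
of orbits of cardinality exactly `n` of the cyclic rotation action on `A(n,q,t)`. -/
noncomputable def lyndonCount (q n : ℕ) (t : ZMod q) : ℕ := necklaceCount n q t n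

open Finset Function

namespace Function

variable {α : Type*} {f : α → α} {x : α}

-- `necklace v` is `forwardOrbit rot v` by definition.
def forwardOrbit (f : α → α) (x : α) : Set α :=
  {y | ∃ k : ℕ, f^[k] x = y}

theorem forwardOrbit_eq_image_Iio (hx : x ∈ periodicPts f) :
    forwardOrbit f x = (f^[·] x) '' Set.Iio (minimalPeriod f x) := by
  ext y
  constructor
  · rintro ⟨k, rfl⟩
    exact ⟨k % minimalPeriod f x, Nat.mod_lt _ (minimalPeriod_pos_of_mem_periodicPts hx),
      iterate_mod_minimalPeriod_eq⟩
  · rintro ⟨k, -, rfl⟩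
    exact ⟨k, rfl⟩

theorem ncard_forwardOrbit (hx : x ∈ periodicPts f) :
    (forwardOrbit f x).ncard = minimalPeriod f x := by
  rw [forwardOrbit_eq_image_Iio hx, iterate_injOn_Iio_minimalPeriod.ncard_image,
    ← coe_range, Set.ncard_coe_finset, card_range]

theorem forwardOrbit_eq_setOf_mem_periodicOrbit (hx : x ∈ periodicPts f) :
    forwardOrbit f x = {y | y ∈ periodicOrbit f x} :=
  Set.ext fun _ => (mem_periodicOrbit_iff hx).symm

theorem forwardOrbit_iterate (hx : x ∈ periodicPts f) (k : ℕ) :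
    forwardOrbit f (f^[k] x) = forwardOrbit f x := by
  have hkx : f^[k] x ∈ periodicPts f :=
    mk_mem_periodicPts (minimalPeriod_pos_of_mem_periodicPts hx)
      ((isPeriodicPt_minimalPeriod f x).apply_iterate k)
  rw [forwardOrbit_eq_setOf_mem_periodicOrbit hx, forwardOrbit_eq_setOf_mem_periodicOrbit hkx,
    periodicOrbit_apply_iterate_eq hx]

theorem mul_ncard_forwardOrbits_eq [Finite α] {s : Set α} (hs : Set.MapsTo f s s)
    (hper : s ⊆ periodicPts f) (p : ℕ) :
    p * {O : Set α | (∃ x, x ∈ s ∧ O = forwardOrbit f x) ∧ O.ncard = p}.ncard =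
      {x ∈ s | minimalPeriod f x = p}.ncard := by
  set S := {O : Set α | (∃ x, x ∈ s ∧ O = forwardOrbit f x) ∧ O.ncard = p}
  have hunion : {x ∈ s | minimalPeriod f x = p} = ⋃ O ∈ S, O := by
    ext y
    simp only [Set.mem_ofPred_eq, Set.mem_iUnion, exists_prop]
    constructor
    · rintro ⟨hy, rfl⟩
      exact ⟨_, ⟨⟨y, hy, rfl⟩, ncard_forwardOrbit (hper hy)⟩, 0, rfl⟩
    · rintro ⟨_, ⟨⟨x, hx, rfl⟩, hp⟩, k, rfl⟩
      rw [ncard_forwardOrbit (hper hx)] at hp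
      exact ⟨hs.iterate k hx, by rw [minimalPeriod_apply_iterate (hper hx), hp]⟩
  have hdisj : S.PairwiseDisjoint id := by
    rintro _ ⟨⟨x, hx, rfl⟩, -⟩ _ ⟨⟨y, hy, rfl⟩, -⟩ hne
    refine Set.disjoint_left.mpr ?_
    rintro _ ⟨k, rfl⟩ ⟨l, hl⟩
    exact hne (by rw [← forwardOrbit_iterate (hper hx) k, ← hl, forwardOrbit_iterate (hper hy)])
  rw [hunion, S.toFinite.ncard_biUnion (s := fun O => O) (fun O _ => O.toFinite) hdisj,
    ← finsum_one, mul_finsum_mem]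
  exact finsum_mem_congr rfl fun O hO => by simp [hO.2]

theorem card_iterate_eq_self_eq_sum_card_minimalPeriod_eq [Fintype α] [DecidableEq α]
    (P : α → Prop) [DecidablePred P] {e : ℕ} (he : 0 < e) :
    #{x | P x ∧ f^[e] x = x} = ∑ d ∈ e.divisors, #{x | P x ∧ minimalPeriod f x = d} := by
  rw [card_eq_sum_card_fiberwise (f := minimalPeriod f) (t := e.divisors)]
  · refine sum_congr rfl fun d hd => ?_
    rw [filter_filter]
    refine congrArg card (filter_congr fun x _ => ?_)
    refine ⟨fun h => ⟨h.1.1, h.2⟩, fun h => ⟨⟨h.1, ?_⟩, h.2⟩⟩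
    exact isPeriodicPt_iff_minimalPeriod_dvd.mpr (h.2 ▸ Nat.dvd_of_mem_divisors hd)
  · intro x hx
    exact Nat.mem_divisors.mpr ⟨IsPeriodicPt.minimalPeriod_dvd (mem_filter.mp hx).2.2, he.ne'⟩

theorem card_minimalPeriod_eq_sum_moebius [Fintype α] [DecidableEq α] (P : α → Prop)
    [DecidablePred P] {n : ℕ} (hn : 0 < n) :
    (#{x | P x ∧ minimalPeriod f x = n} : ℤ) =
      ∑ de ∈ n.divisorsAntidiagonal,
        ArithmeticFunction.moebius de.1 * #{x | P x ∧ f^[de.2] x = x} :=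
  (ArithmeticFunction.sum_eq_iff_sum_mul_moebius_eq
    (f := fun d => (#{x | P x ∧ minimalPeriod f x = d} : ℤ))
    (g := fun e => #{x | P x ∧ f^[e] x = x}) |>.mp (fun e he => by
      exact_mod_cast (card_iterate_eq_self_eq_sum_card_minimalPeriod_eq P he).symm) n hn).symm

end Function

section Rotation

variable {n : ℕ} {α : Type*}

theorem rot_eq_comp_finRotate (v : Fin n → α) : rot v = v ∘ finRotate n := by
  funext i
  have := i.neZero
  rw [rot, comp_apply, finRotate_apply]
  congr 1
  rw [Fin.ext_iff, Fin.val_add, Fin.val_one', Nat.add_mod_mod]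

theorem rot_iterate_apply (v : Fin n → α) (k : ℕ) (i : Fin n) :
    (rot^[k] v) i = v ⟨(i + k) % n, Nat.mod_lt _ i.pos⟩ := by
  induction k generalizing i with
  | zero => simp [Nat.mod_eq_of_lt i.isLt]
  | succ k ih =>
    rw [iterate_succ_apply', rot, ih]
    simp only [Nat.mod_add_mod, Nat.add_assoc, Nat.add_comm 1 k]

theorem isPeriodicPt_rot (v : Fin n → α) : IsPeriodicPt rot n v := by
  funext i
  simp [rot_iterate_apply, Nat.mod_eq_of_lt i.isLt]

theorem sum_rot_iterate [AddCommMonoid α] (v : Fin n → α) (k : ℕ) :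
    ∑ i, (rot^[k] v) i = ∑ i, v i :=
  congrFun (iterate_invariant (g := fun v : Fin n → α => ∑ i, v i)
    (funext fun v => by simp only [comp_apply, rot_eq_comp_finRotate, Equiv.sum_comp]) k) v

theorem apply_eq_apply_mod_of_isPeriodicPt_rot {e : ℕ} {v : Fin n → α}
    (hv : IsPeriodicPt rot e v) (i : Fin n) :
    v i = v ⟨i % e, (Nat.mod_le _ _).trans_lt i.isLt⟩ := by
  have := congrFun (hv.mul_const (i / e)) ⟨i % e, (Nat.mod_le _ _).trans_lt i.isLt⟩
  simpa [rot_iterate_apply, Nat.mod_add_div, Nat.mod_eq_of_lt i.isLt] using this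

end Rotation

section PeriodicWords

variable {α : Type*}

theorem sum_comp_modNat [AddCommMonoid α] (m : ℕ) {e : ℕ} (u : Fin e → α) :
    ∑ i : Fin (m * e), u i.modNat = m • ∑ j, u j := by
  simpa [Fintype.sum_prod_type] using finProdFinEquiv.symm.sum_comp (fun p => u p.2)

theorem isPeriodicPt_rot_comp_modNat (m : ℕ) {e : ℕ} (u : Fin e → α) :
    IsPeriodicPt rot e (u ∘ Fin.modNat (m := m)) := by
  funext i
  simp only [rot_iterate_apply, comp_apply, Fin.modNat, Nat.mod_mod_of_dvd _ (dvd_mul_left e m),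
    Nat.add_mod_right]

theorem card_filter_sum_eq_and_rot_iterate_eq [AddCommMonoid α] [Fintype α] [DecidableEq α]
    {m e n : ℕ} (hmen : m * e = n) (hm : 0 < m) (t : α) :
    #{v : Fin n → α | ∑ i, v i = t ∧ rot^[e] v = v} =
      #{u : Fin e → α | m • ∑ j, u j = t} := by
  subst hmen
  have hle : e ≤ m * e := Nat.le_mul_of_pos_left e hm
  have hext (v : Fin (m * e) → α) (hv : rot^[e] v = v) (i : Fin (m * e)) :
      v (Fin.castLE hle i.modNat) = v i :=
    (apply_eq_apply_mod_of_isPeriodicPt_rot hv i).symm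
  refine card_nbij' (· ∘ Fin.castLE hle) (· ∘ Fin.modNat) ?_ ?_ ?_ ?_
  · intro v hv
    simp only [coe_filter, mem_univ, true_and, Set.mem_ofPred_eq] at hv ⊢
    rw [← sum_comp_modNat]
    simpa only [comp_apply, hext v hv.2] using hv.1
  · intro u hu
    simp only [coe_filter, mem_univ, true_and, Set.mem_ofPred_eq] at hu ⊢
    exact ⟨(sum_comp_modNat m u).trans hu, isPeriodicPt_rot_comp_modNat m u⟩
  · intro v hv
    exact funext (hext v (mem_filter.mp hv).2.2)
  · intro u _
    funext j
    simp [Fin.modNat, Nat.mod_eq_of_lt j.isLt]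

end PeriodicWords

section Counting

variable {G : Type*} [AddCommGroup G] [Fintype G] [DecidableEq G]

theorem card_filter_sum_eq (e : ℕ) (y : G) :
    #{u : Fin (e + 1) → G | ∑ i, u i = y} = Fintype.card G ^ e := by
  rw [show Fintype.card G ^ e = #(univ : Finset (Fin e → G)) by simp]
  refine card_nbij' Fin.tail (fun w => Fin.cons (y - ∑ i, w i) w) (fun _ _ => mem_univ _) ?_ ?_ ?_
  · intro w _
    simp [Fin.sum_cons]
  · intro u hu
    have hu : u 0 + ∑ i : Fin e, u i.succ = y := by
      simpa [Fin.sum_univ_succ] using hu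
    simp [← hu, Fin.tail, Fin.cons_self_tail]
  · intro w _
    simp

theorem card_filter_nsmul_sum_eq (m e : ℕ) (t : G) :
    #{u : Fin (e + 1) → G | m • ∑ j, u j = t} =
      #{y : G | m • y = t} * Fintype.card G ^ e := by
  rw [card_eq_sum_card_fiberwise (f := fun u => ∑ j, u j) (t := {y : G | m • y = t})]
  · rw [sum_const_nat fun y hy => ?_]
    rw [filter_filter, ← card_filter_sum_eq e y]
    congr 1
    refine filter_congr fun u _ => and_iff_right_of_imp fun hu => ?_
    rw [hu]
    exact (mem_filter.mp hy).2
  · intro u hu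
    simpa using hu

end Counting

namespace ZMod

variable {q : ℕ}

theorem exists_nsmul_eq_iff [NeZero q] (m : ℕ) (t : ZMod q) :
    (∃ x : ZMod q, m • x = t) ↔ Nat.gcd m q ∣ t.val := by
  constructor
  · rintro ⟨x, rfl⟩
    have hg := Nat.gcd_dvd_right m q
    rw [nsmul_eq_mul, val_mul, val_natCast, Nat.dvd_mod_iff hg]
    exact ((Nat.dvd_mod_iff hg).mpr (Nat.gcd_dvd_left m q)).mul_right _
  · rintro ⟨c, hc⟩
    have hbezout : (Nat.gcd m q : ZMod q) = m * Nat.gcdA m q := by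
      simpa using congrArg (Int.cast : ℤ → ZMod q) (Nat.gcd_eq_gcd_ab m q)
    refine ⟨Nat.gcdA m q * c, ?_⟩
    rw [nsmul_eq_mul, ← mul_assoc, ← hbezout, ← Nat.cast_mul, ← hc, natCast_zmod_val]

theorem card_filter_nsmul_eq [NeZero q] (m : ℕ) (t : ZMod q) :
    #{x : ZMod q | m • x = t} = if Nat.gcd m q ∣ t.val then Nat.gcd m q else 0 := by
  split_ifs with h
  · obtain ⟨x, hx⟩ := (exists_nsmul_eq_iff m t).mpr h
    calc #{x : ZMod q | m • x = t} = #{x : ZMod q | m • x = 0} := by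
          simpa only [nsmulAddMonoidHom_apply] using
            AddMonoidHom.card_fiber_eq_of_mem_range (nsmulAddMonoidHom m : ZMod q →+ ZMod q)
              ⟨x, hx⟩ ⟨0, nsmul_zero m⟩
      _ = Nat.card (nsmulAddMonoidHom m : ZMod q →+ ZMod q).ker := by
          rw [← Fintype.card_subtype, ← Nat.card_eq_fintype_card]
          rfl
      _ = Nat.gcd m q := by
          rw [IsAddCyclic.card_nsmulAddMonoidHom_ker, Nat.card_zmod, Nat.gcd_comm]
  · rw [card_eq_zero, filter_eq_empty_iff]
    exact fun x _ hx => h ((exists_nsmul_eq_iff m t).mp ⟨x, hx⟩)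

end ZMod

theorem mul_card_filter_sum_eq_and_rot_iterate_eq {q d e n : ℕ} [NeZero q] (hden : d * e = n)
    (hd : 0 < d) (he : 0 < e) (t : ZMod q) :
    q * #{v : Fin n → ZMod q | ∑ i, v i = t ∧ rot^[e] v = v} =
      if Nat.gcd d q ∣ t.val then Nat.gcd d q * q ^ e else 0 := by
  obtain ⟨e, rfl⟩ := Nat.exists_eq_add_one_of_ne_zero he.ne'
  rw [card_filter_sum_eq_and_rot_iterate_eq hden hd, card_filter_nsmul_sum_eq,
    ZMod.card_filter_nsmul_eq, ZMod.card]
  split_ifs <;> ring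

theorem mul_necklaceCount {n q : ℕ} [NeZero q] (hn : 0 < n) (t : ZMod q) (p : ℕ) :
    p * necklaceCount n q t p =
      #{v : Fin n → ZMod q | ∑ i, v i = t ∧ minimalPeriod rot v = p} := by
  have hs : Set.MapsTo rot {v : Fin n → ZMod q | ∑ i, v i = t} {v | ∑ i, v i = t} :=
    fun v hv => (sum_rot_iterate v 1).trans hv
  have hper : {v : Fin n → ZMod q | ∑ i, v i = t} ⊆ periodicPts rot :=
    fun v _ => mk_mem_periodicPts hn (isPeriodicPt_rot v)
  rw [necklaceCount, ← Set.ncard_coe_finset, coe_filter_univ]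
  exact mul_ncard_forwardOrbits_eq hs hper p

theorem lyndonCount_formula_general (n q : ℕ) [NeZero q] (hn : 1 ≤ n) (t : ZMod q) :
    (q : ℤ) * (n : ℤ) * (lyndonCount q n t : ℤ) =
      ∑ d ∈ n.divisors.filter (fun d => Nat.gcd d q ∣ t.val),
        (Nat.gcd d q : ℤ) * (ArithmeticFunction.moebius d) * (q : ℤ) ^ (n / d) := by
  classical
  have haperiodic : (n : ℤ) * lyndonCount q n t =
      #{v : Fin n → ZMod q | ∑ i, v i = t ∧ minimalPeriod rot v = n} := by
    exact_mod_cast mul_necklaceCount hn t n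
  calc (q : ℤ) * n * lyndonCount q n t
      = ∑ de ∈ n.divisorsAntidiagonal, ArithmeticFunction.moebius de.1 *
          ((q * #{v : Fin n → ZMod q | ∑ i, v i = t ∧ rot^[de.2] v = v} : ℕ) : ℤ) := by
        rw [mul_assoc, haperiodic, card_minimalPeriod_eq_sum_moebius _ hn, mul_sum]
        refine sum_congr rfl fun de _ => ?_
        push_cast
        ring
    _ = ∑ de ∈ n.divisorsAntidiagonal, if Nat.gcd de.1 q ∣ t.val then
          (Nat.gcd de.1 q : ℤ) * ArithmeticFunction.moebius de.1 * (q : ℤ) ^ de.2 else 0 := by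
        refine sum_congr rfl fun de hde => ?_
        obtain ⟨hden, hn0⟩ := Nat.mem_divisorsAntidiagonal.mp hde
        obtain ⟨hd, he⟩ := Nat.mul_ne_zero_iff.mp (hden ▸ hn0)
        rw [mul_card_filter_sum_eq_and_rot_iterate_eq hden (Nat.pos_of_ne_zero hd)
          (Nat.pos_of_ne_zero he)]
        split_ifs <;> push_cast <;> ring
    _ = _ := by
        rw [Nat.sum_divisorsAntidiagonal (fun d e => if Nat.gcd d q ∣ t.val then
          (Nat.gcd d q : ℤ) * ArithmeticFunction.moebius d * (q : ℤ) ^ e else 0), sum_filter]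

/-- For `n ≥ 1`, `q ≥ 1` and `t : ZMod q`, as integers,
`q * n * L_q(n,t) = ∑ gcd(d,q) * μ(d) * q^(n/d)`, the sum over positive divisors `d`
of `n` with `gcd(d,q)` dividing the canonical representative of `t` in `{0,…,q-1}`. -/
theorem lyndonCount_formula (n q : ℕ) [NeZero q] (hn : 1 ≤ n) (hq : 1 ≤ q) (t : ZMod q) :
    (q : ℤ) * (n : ℤ) * (lyndonCount q n t : ℤ) =
      ∑ d ∈ n.divisors.filter (fun d => Nat.gcd d q ∣ t.val),
        (Nat.gcd d q : ℤ) * (ArithmeticFunction.moebius d) * (q : ℤ) ^ (n / d) :=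
  lyndonCount_formula_general n q hn t
end

section
/- Let V be a finite type and A : Matrix V V ℕ. Suppose that for all v, w ∈ V there exists m ≥ 1 with (A^m) v w > 0 (E is strongly connected), and that every vertex v has period 1, i.e. any natural number dividing every element of S(v) = {m ≥ 1 : (A^m) v v > 0} divides 1. Then there exists n ≥ 1 such that every entry of A^n is positive (E is n-connected). -/
/-!
Positive entries of powers of `A` compose: a walk `u → v` of length `p` followed by one `v → w` of
length `q` gives `0 < (A ^ (p + q)) u w`. Hence the return times of a vertex form an additive
submonoid of `ℕ`; period `1` says its gcd is `1`, so it contains every large enough integer.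
Following such a closed walk at `v` by a fixed walk `v → w` shows that `(A ^ n) v w > 0` for all
large `n`, and finitely many pairs `(v, w)` give a common `n`.
-/

open Filter

namespace Matrix

variable {V : Type*} [Fintype V] [DecidableEq V] (A : Matrix V V ℕ)

theorem pow_add_apply_pos {p q : ℕ} {u v w : V} (hp : 0 < (A ^ p) u v) (hq : 0 < (A ^ q) v w) :
    0 < (A ^ (p + q)) u w := by
  rw [pow_add, mul_apply]
  exact (Nat.mul_pos hp hq).trans_le <|
    Finset.single_le_sum (f := fun j => (A ^ p) u j * (A ^ q) j w) (fun _ _ => Nat.zero_le _)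
      (Finset.mem_univ v)

def returnTimes (v : V) : AddSubmonoid ℕ where
  carrier := {m | 0 < (A ^ m) v v}
  add_mem' := pow_add_apply_pos A
  zero_mem' := by simp

theorem setGcd_returnTimes_eq_one {v : V}
    (hper : ∀ k : ℕ, (∀ m : ℕ, 1 ≤ m → 0 < (A ^ m) v v → k ∣ m) → k ∣ 1) :
    Nat.setGcd (returnTimes A v) = 1 :=
  Nat.dvd_one.mp <| hper _ fun _ _ hm => Nat.setGcd_dvd_of_mem (s := returnTimes A v) hm

theorem eventually_pos_pow_apply_self {v : V} (hv : Nat.setGcd (returnTimes A v) = 1) :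
    ∀ᶠ n in atTop, 0 < (A ^ n) v v := by
  obtain ⟨N, hN⟩ := Nat.exists_mem_closure_of_ge (returnTimes A v : Set ℕ)
  rw [AddSubmonoid.closure_eq, hv] at hN
  exact eventually_atTop.mpr ⟨N, fun n hn => hN n hn (one_dvd n)⟩

theorem eventually_pos_pow_apply_of_pos {b : ℕ} {v w : V}
    (hv : ∀ᶠ n in atTop, 0 < (A ^ n) v v) (hvw : 0 < (A ^ b) v w) :
    ∀ᶠ n in atTop, 0 < (A ^ n) v w := by
  filter_upwards [(tendsto_sub_atTop_nat b).eventually hv, eventually_ge_atTop b] with n hn hbn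
  simpa [Nat.sub_add_cancel hbn] using pow_add_apply_pos A hn hvw

end Matrix

/-- Let `A` be the vertex matrix of a finite directed graph which is strongly connected
(for all `v, w` there is `m ≥ 1` with `(A ^ m) v w > 0`) and in which every vertex has
period `1` (any natural number dividing every element of
`S(v) = {m ≥ 1 : (A ^ m) v v > 0}` divides `1`). Then the graph is `n`-connected for
some `n ≥ 1`: every entry of `A ^ n` is positive. -/
theorem strongly_connected_period_one_implies_n_connected (V : Type*) [Fintype V]
    [DecidableEq V] (A : Matrix V V ℕ)
    (hsc : ∀ v w : V, ∃ m : ℕ, 1 ≤ m ∧ 0 < (A ^ m) v w)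
    (hper : ∀ v : V, ∀ k : ℕ, (∀ m : ℕ, 1 ≤ m → 0 < (A ^ m) v v → k ∣ m) → k ∣ 1) :
    ∃ n : ℕ, 1 ≤ n ∧ ∀ v w : V, 0 < (A ^ n) v w := by
  have hpos : ∀ᶠ n in atTop, ∀ v w : V, 0 < (A ^ n) v w := by
    simp only [eventually_all]
    intro v w
    obtain ⟨b, -, hb⟩ := hsc v w
    exact A.eventually_pos_pow_apply_of_pos
      (A.eventually_pos_pow_apply_self (A.setGcd_returnTimes_eq_one (hper v))) hb
  exact ((eventually_ge_atTop 1).and hpos).exists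
end

section
/- Let B be a C*-algebra over ℂ, n ≥ 1 an integer, and γ a ⋆-algebra automorphism of B with γ^n = id. Then the map φ sending f ∈ Ind to the function t ↦ f(−t/n) on [0,1] is a well-defined ⋆-algebra isomorphism of the induced algebra Ind = {f : ℝ → B continuous | ∀ t, f(t + 1/n) = γ⁻¹(f(t))} onto the mapping cylinder M(γ) = {g : [0,1] → B continuous | g(1) = γ(g(0))}. -/
/-- The induced algebra `Ind = {f : ℝ → B continuous | ∀ t, f (t + 1/n) = γ⁻¹ (f t)}`,
as a ⋆-subalgebra of `C(ℝ, B)`. -/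
def inducedAlgebra (B : Type*) [NormedRing B] [StarRing B] [CStarRing B]
    [NormedAlgebra ℂ B] [StarModule ℂ B] (n : ℕ) (γ : B ≃⋆ₐ[ℂ] B) :
    StarSubalgebra ℂ C(ℝ, B) where
  carrier := {f | ∀ t : ℝ, f (t + 1 / n) = γ.symm (f t)}
  mul_mem' := by
    intro a b ha hb t
    simp only [ContinuousMap.mul_apply]
    rw [ha t, hb t, map_mul]
  one_mem' := by
    intro t
    simp only [ContinuousMap.one_apply, map_one]
  add_mem' := by
    intro a b ha hb t
    simp only [ContinuousMap.add_apply]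
    rw [ha t, hb t, map_add]
  zero_mem' := by
    intro t
    simp only [ContinuousMap.zero_apply, map_zero]
  algebraMap_mem' := by
    intro r t
    simp only [Algebra.algebraMap_eq_smul_one, ContinuousMap.smul_apply,
      ContinuousMap.one_apply, map_smul, map_one]
  star_mem' := by
    intro a ha t
    simp only [ContinuousMap.star_apply]
    rw [ha t, map_star]

/-- The mapping cylinder `M(γ) = {g : [0,1] → B continuous | g 1 = γ (g 0)}`,
as a ⋆-subalgebra of `C([0,1], B)`. -/
def mappingCylinder (B : Type*) [NormedRing B] [StarRing B] [CStarRing B]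
    [NormedAlgebra ℂ B] [StarModule ℂ B] (γ : B ≃⋆ₐ[ℂ] B) :
    StarSubalgebra ℂ C(Set.Icc (0 : ℝ) 1, B) where
  carrier := {g | g ⟨1, Set.mem_Icc.mpr ⟨zero_le_one, le_refl 1⟩⟩ =
      γ (g ⟨0, Set.mem_Icc.mpr ⟨le_refl 0, zero_le_one⟩⟩)}
  mul_mem' := by
    intro a b ha hb
    simp only [Set.mem_setOf_eq, ContinuousMap.mul_apply] at *
    rw [ha, hb, map_mul]
  one_mem' := by
    simp only [Set.mem_setOf_eq, ContinuousMap.one_apply, map_one]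
  add_mem' := by
    intro a b ha hb
    simp only [Set.mem_setOf_eq, ContinuousMap.add_apply] at *
    rw [ha, hb, map_add]
  zero_mem' := by
    simp only [Set.mem_setOf_eq, ContinuousMap.zero_apply, map_zero]
  algebraMap_mem' := by
    intro r
    simp only [Set.mem_setOf_eq, Algebra.algebraMap_eq_smul_one, ContinuousMap.smul_apply,
      ContinuousMap.one_apply, map_smul, map_one]
  star_mem' := by
    intro a ha
    simp only [Set.mem_setOf_eq, ContinuousMap.star_apply] at *
    rw [ha, map_star]

/-!
The substitution `u = -n t` identifies `Ind` with the continuous `G : ℝ → B` satisfying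
`G (u + 1) = γ (G u)`. Such a `G` is determined by its restriction `g` to `[0, 1]`, which lies in
`M(γ)`, through `G u = γ ^ ⌊u⌋ (g (fract u))`. Conversely, for every `g ∈ M(γ)` this formula is
continuous: on each `[m, m + 1]` it is `γ ^ m ∘ g` shifted by `m`, and the condition
`g 1 = γ (g 0)` makes consecutive pieces agree at the integers. The powers `γ ^ m` are continuous
because ⋆-isomorphisms of C⋆-algebras are isometric.
-/

open Set

lemma continuous_of_continuousOn_Icc_intCast {X : Type*} [TopologicalSpace X] {f : ℝ → X}
    (hf : ∀ m : ℤ, ContinuousOn f (Icc (m : ℝ) (m + 1))) : Continuous f := by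
  refine continuous_iff_continuousAt.2 fun u => continuousAt_iff_continuous_left_right.2 ⟨?_, ?_⟩
  · have hu : u ∈ Ioc ((⌈u⌉ - 1 : ℤ) : ℝ) ((⌈u⌉ - 1 : ℤ) + 1) := by
      push_cast
      exact ⟨by linarith [Int.ceil_lt_add_one u], by linarith [Int.le_ceil u]⟩
    exact ((hf _).continuousWithinAt (Ioc_subset_Icc_self hu)).mono_of_mem_nhdsWithin
      (Icc_mem_nhdsLE_of_mem hu)
  · have hu : u ∈ Ico (⌊u⌋ : ℝ) (⌊u⌋ + 1) := ⟨Int.floor_le u, Int.lt_floor_add_one u⟩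
    exact ((hf _).continuousWithinAt (Ico_subset_Icc_self hu)).mono_of_mem_nhdsWithin
      (Icc_mem_nhdsGE_of_mem hu)

namespace Homeomorph

variable {X : Type*} [TopologicalSpace X] (e : X ≃ₜ X)

lemma apply_add_intCast_of_apply_add_one {G : ℝ → X} (hG : ∀ u, G (u + 1) = e (G u))
    (k : ℤ) (u : ℝ) : G (u + k) = (e ^ k) (G u) := by
  induction k using Int.induction_on with
  | zero => simp
  | succ k ih =>
    rw [Int.cast_add, Int.cast_one, ← add_assoc, hG, ih, add_comm (k : ℤ), zpow_one_add,
      mul_apply]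
  | pred k ih =>
    have h := hG (u + ((-k - 1 : ℤ) : ℝ))
    rw [add_assoc, show ((-k - 1 : ℤ) : ℝ) + 1 = ((-k : ℤ) : ℝ) by push_cast; ring, ih] at h
    rw [e.eq_symm_apply.2 h.symm, sub_eq_neg_add, zpow_add, zpow_neg_one, mul_apply, inv_apply]

noncomputable def twistedPeriodicExtend (g : C(Icc (0 : ℝ) 1, X)) (u : ℝ) : X :=
  (e ^ ⌊u⌋) (g ⟨Int.fract u, Int.fract_nonneg u, (Int.fract_lt_one u).le⟩)

variable {e}

lemma twistedPeriodicExtend_add_one (g : C(Icc (0 : ℝ) 1, X)) (u : ℝ) :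
    twistedPeriodicExtend e g (u + 1) = e (twistedPeriodicExtend e g u) := by
  simp only [twistedPeriodicExtend, Int.floor_add_one, Int.fract_add_one, add_comm _ (1 : ℤ),
    zpow_one_add, mul_apply]

lemma twistedPeriodicExtend_restrict {G : C(ℝ, X)} (hG : ∀ u, G (u + 1) = e (G u)) :
    twistedPeriodicExtend e (G.restrict (Icc 0 1)) = G := by
  ext u
  simp only [twistedPeriodicExtend, ContinuousMap.restrict_apply]
  rw [← apply_add_intCast_of_apply_add_one e hG, Int.fract_add_floor]

variable {g : C(Icc (0 : ℝ) 1, X)}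

lemma twistedPeriodicExtend_of_mem_Icc (hg : g 1 = e (g 0)) {u : ℝ} (hu : u ∈ Icc (0 : ℝ) 1) :
    twistedPeriodicExtend e g u = g ⟨u, hu⟩ := by
  rcases hu.2.lt_or_eq with hlt | heq
  · have hfloor : ⌊u⌋ = 0 := Int.floor_eq_zero_iff.2 ⟨hu.1, hlt⟩
    simp only [twistedPeriodicExtend, hfloor, zpow_zero, one_apply, Int.fract, Int.cast_zero,
      sub_zero]
  · rw [show (⟨u, hu⟩ : Icc (0 : ℝ) 1) = 1 from Subtype.ext heq, hg, heq]
    simp [twistedPeriodicExtend]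

lemma twistedPeriodicExtend_eq_of_mem_Icc_intCast (hg : g 1 = e (g 0)) (m : ℤ) {u : ℝ}
    (hu : u ∈ Icc (m : ℝ) (m + 1)) :
    twistedPeriodicExtend e g u = (e ^ m) (IccExtend zero_le_one g (u - m)) := by
  have hu' : u - m ∈ Icc (0 : ℝ) 1 := ⟨by linarith [hu.1], by linarith [hu.2]⟩
  rw [IccExtend_of_mem _ _ hu', ← twistedPeriodicExtend_of_mem_Icc hg hu',
    ← apply_add_intCast_of_apply_add_one e (twistedPeriodicExtend_add_one g), sub_add_cancel]

lemma continuous_twistedPeriodicExtend (hg : g 1 = e (g 0)) :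
    Continuous (twistedPeriodicExtend e g) :=
  continuous_of_continuousOn_Icc_intCast fun m =>
    ((e ^ m).continuous.comp (continuous_IccExtend_iff.2 g.continuous |>.comp
      (continuous_sub_right _))).continuousOn.congr
      fun _ hu => twistedPeriodicExtend_eq_of_mem_Icc_intCast hg m hu

end Homeomorph

section CStarRing

variable {B : Type*} [NormedRing B] [StarRing B] [CStarRing B] [NormedAlgebra ℂ B]
  [StarModule ℂ B] [CompleteSpace B]

noncomputable def StarAlgEquiv.toHomeomorph (γ : B ≃⋆ₐ[ℂ] B) : B ≃ₜ B :=
  letI : CStarAlgebra B := {}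
  { toEquiv := γ.toRingEquiv.toEquiv
    continuous_toFun := (StarAlgEquiv.isometry γ).continuous
    continuous_invFun := (StarAlgEquiv.isometry γ.symm).continuous }

end CStarRing

section InducedAlgebra

variable {B : Type*} [NormedRing B] [StarRing B] [CStarRing B] [NormedAlgebra ℂ B]
  [StarModule ℂ B] {n : ℕ} {γ : B ≃⋆ₐ[ℂ] B}

lemma restrict_mem_mappingCylinder {G : C(ℝ, B)} (hG : ∀ u, G (u + 1) = γ (G u)) :
    G.restrict (Icc 0 1) ∈ mappingCylinder B γ := by
  change G 1 = γ (G 0)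
  simpa using hG 0

lemma apply_neg_div_add_one_of_mem_inducedAlgebra (hn : 1 ≤ n) {f : C(ℝ, B)}
    (hf : f ∈ inducedAlgebra B n γ) (u : ℝ) : f (-(u + 1) / n) = γ (f (-u / n)) := by
  have hn0 : (n : ℝ) ≠ 0 := by positivity
  have h := hf (-(u + 1) / n)
  rw [show -(u + 1) / n + 1 / n = -u / n by field_simp; ring] at h
  rw [h, StarAlgEquiv.apply_symm_apply]

lemma comp_neg_mul_mem_inducedAlgebra (hn : 1 ≤ n) {G : C(ℝ, B)}
    (hG : ∀ u, G (u + 1) = γ (G u)) :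
    G.comp ⟨fun t => -(n * t), by fun_prop⟩ ∈ inducedAlgebra B n γ := by
  have hn0 : (n : ℝ) ≠ 0 := by positivity
  intro t
  simp only [ContinuousMap.comp_apply, ContinuousMap.coe_mk]
  rw [show -(n * (t + 1 / n)) = -(n * t) - 1 by field_simp; ring, StarAlgEquiv.eq_symm_apply,
    ← hG, sub_add_cancel]

end InducedAlgebra

section Equiv

variable {B : Type*} [NormedRing B] [StarRing B] [CStarRing B] [NormedAlgebra ℂ B]
  [StarModule ℂ B] [CompleteSpace B] {n : ℕ}

noncomputable def inducedAlgebraEquivMappingCylinder (hn : 1 ≤ n) (γ : B ≃⋆ₐ[ℂ] B) :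
    inducedAlgebra B n γ ≃⋆ₐ[ℂ] mappingCylinder B γ where
  toFun f := ⟨((f : C(ℝ, B)).comp ⟨fun u => -u / n, by fun_prop⟩).restrict (Icc 0 1),
    restrict_mem_mappingCylinder (apply_neg_div_add_one_of_mem_inducedAlgebra hn f.2)⟩
  invFun g := ⟨ContinuousMap.comp
      ⟨γ.toHomeomorph.twistedPeriodicExtend g, Homeomorph.continuous_twistedPeriodicExtend g.2⟩
      ⟨fun t => -(n * t), by fun_prop⟩,
    comp_neg_mul_mem_inducedAlgebra hn
      (Homeomorph.twistedPeriodicExtend_add_one (e := γ.toHomeomorph) g)⟩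
  left_inv f := by
    have hn0 : (n : ℝ) ≠ 0 := by positivity
    have hG := Homeomorph.twistedPeriodicExtend_restrict (e := γ.toHomeomorph)
      (G := (f : C(ℝ, B)).comp ⟨fun u => -u / n, by fun_prop⟩)
      (apply_neg_div_add_one_of_mem_inducedAlgebra hn f.2)
    ext t
    simp [hG, hn0]
  right_inv g := by
    have hn0 : (n : ℝ) ≠ 0 := by positivity
    ext t
    change γ.toHomeomorph.twistedPeriodicExtend g (-(n * (-t / n))) =
      (g : C(Icc (0 : ℝ) 1, B)) t
    rw [show -(n * (-(t : ℝ) / n)) = t by field_simp]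
    exact Homeomorph.twistedPeriodicExtend_of_mem_Icc (e := γ.toHomeomorph) g.2 t.2
  map_mul' _ _ := rfl
  map_add' _ _ := rfl
  map_star' _ := rfl
  map_smul' _ _ := rfl

end Equiv

theorem inducedAlgebra_starAlgEquiv_mappingCylinder_general (B : Type*) [NormedRing B] [StarRing B]
    [CStarRing B] [NormedAlgebra ℂ B] [StarModule ℂ B] [CompleteSpace B]
    (n : ℕ) (hn : 1 ≤ n) (γ : B ≃⋆ₐ[ℂ] B) :
    ∃ φ : inducedAlgebra B n γ ≃⋆ₐ[ℂ] mappingCylinder B γ,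
      ∀ (f : inducedAlgebra B n γ) (t : Set.Icc (0 : ℝ) 1),
        ((φ f : C(Set.Icc (0 : ℝ) 1, B)) t) = (f : C(ℝ, B)) (-(t : ℝ) / n) :=
  ⟨inducedAlgebraEquivMappingCylinder hn γ, fun _ _ => rfl⟩

/-- Let `B` be a C*-algebra, `n ≥ 1`, and `γ` a ⋆-algebra automorphism of `B` with
`γ ^ n = id`. Then the map `f ↦ (t ↦ f (-t/n))` is a well-defined ⋆-algebra isomorphism
of the induced algebra `Ind = {f : ℝ → B continuous | ∀ t, f (t + 1/n) = γ⁻¹ (f t)}`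
onto the mapping cylinder `M(γ) = {g : [0,1] → B continuous | g 1 = γ (g 0)}`. -/
theorem inducedAlgebra_starAlgEquiv_mappingCylinder (B : Type*) [NormedRing B] [StarRing B]
    [CStarRing B] [NormedAlgebra ℂ B] [StarModule ℂ B] [CompleteSpace B]
    (n : ℕ) (hn : 1 ≤ n) (γ : B ≃⋆ₐ[ℂ] B) (hγ : (⇑γ)^[n] = id) :
    ∃ φ : inducedAlgebra B n γ ≃⋆ₐ[ℂ] mappingCylinder B γ,
      ∀ (f : inducedAlgebra B n γ) (t : Set.Icc (0 : ℝ) 1),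
        ((φ f : C(Set.Icc (0 : ℝ) 1, B)) t) = (f : C(ℝ, B)) (-(t : ℝ) / n) :=
  inducedAlgebra_starAlgEquiv_mappingCylinder_general B n hn γ
end
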